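/- Correctness of the translation-based model checking algorithm: Let L be a finite distributive lattice and M an mv-CGS over L. Then for every state formula φ of mv-ATL* and every state q: [[φ]]_{M,q} = ⨆ { ℓ ∈ L | ℓ is join-irreducible and [[φ]]_{f_ℓ(M),q} = ⊤ }, where f_ℓ(M) is the reduction of M via the threshold function f_ℓ to the two-element lattice {⊥,⊤}. -/

import Mathlib

/-- A concurrent game structure (CGS): availability function `d` (with every
`d a q` nonempty) and a deterministic transition function `t`. -/
structure CGS (Agt St Act : Type*) where
  d : Agt → St → Set Act
  d_nonempty : ∀ a q, (d a q).Nonempty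
  t : St → (Agt → Act) → St

namespace CGS

variable {Agt St Act : Type*}

/-- An action profile `α` is available at state `q`. -/
def Avail (G : CGS Agt St Act) (q : St) (α : Agt → Act) : Prop :=
  ∀ a, α a ∈ G.d a q

/-- `lam` is a path of `G`: each step is realized by some available profile. -/
def IsPath (G : CGS Agt St Act) (lam : ℕ → St) : Prop :=
  ∀ i, ∃ α, G.Avail (lam i) α ∧ G.t (lam i) α = lam (i + 1)

/-- A perfect-recall strategy for agent `a`: a choice of an available action
for every nonempty finite history, represented as (proper prefix, last state). -/
structure PRStrategy (G : CGS Agt St Act) (a : Agt) where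
  act : List St → St → Act
  avail : ∀ h q, act h q ∈ G.d a q

/-- A collective perfect-recall strategy for the coalition `A`. -/
def PRColl (G : CGS Agt St Act) (A : Set Agt) := (a : A) → PRStrategy G (a : Agt)

/-- The outcome set of a collective perfect-recall strategy `s` from state `q`:
all paths starting at `q` consistent with `s`. -/
def prOut (G : CGS Agt St Act) {A : Set Agt} (q : St) (s : PRColl G A) : Set (ℕ → St) :=
  { lam | lam 0 = q ∧ ∀ i, ∃ α, G.Avail (lam i) α ∧ G.t (lam i) α = lam (i + 1) ∧
      ∀ a : A, α (a : Agt) = (s a).act (List.ofFn fun j : Fin i => lam j) (lam i) }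

end CGS

mutual
/-- State formulas of mv-ATL*. -/
inductive SForm (AP C Agt : Type) : Type
  | const : C → SForm AP C Agt
  | atom  : AP → SForm AP C Agt
  | and   : SForm AP C Agt → SForm AP C Agt → SForm AP C Agt
  | or    : SForm AP C Agt → SForm AP C Agt → SForm AP C Agt
  | coop  : Set Agt → PForm AP C Agt → SForm AP C Agt
  | nec   : Set Agt → PForm AP C Agt → SForm AP C Agt
/-- Path formulas of mv-ATL*. -/
inductive PForm (AP C Agt : Type) : Type
  | state : SForm AP C Agt → PForm AP C Agt
  | and   : PForm AP C Agt → PForm AP C Agt → PForm AP C Agt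
  | or    : PForm AP C Agt → PForm AP C Agt → PForm AP C Agt
  | next  : PForm AP C Agt → PForm AP C Agt
  | untl  : PForm AP C Agt → PForm AP C Agt → PForm AP C Agt
  | wuntl : PForm AP C Agt → PForm AP C Agt → PForm AP C Agt
end

variable {Agt St Act AP C : Type} {L : Type*} [CompleteLattice L]

mutual
/-- Multi-valued truth value of a state formula at a state. -/
noncomputable def sval (G : CGS Agt St Act) (σ : C → L) (V : AP → St → L) :
    SForm AP C Agt → St → L
  | .const c, _ => σ c
  | .atom p, q => V p q
  | .and φ ψ, q => sval G σ V φ q ⊓ sval G σ V ψ q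
  | .or φ ψ, q => sval G σ V φ q ⊔ sval G σ V ψ q
  | .coop A γ, q => ⨆ s : CGS.PRColl G A, ⨅ lam ∈ CGS.prOut G q s, pval G σ V γ lam
  | .nec A γ, q => ⨅ s : CGS.PRColl G A, ⨆ lam ∈ CGS.prOut G q s, pval G σ V γ lam

/-- Multi-valued truth value of a path formula on a path. -/
noncomputable def pval (G : CGS Agt St Act) (σ : C → L) (V : AP → St → L) :
    PForm AP C Agt → (ℕ → St) → L
  | .state φ, lam => sval G σ V φ (lam 0)
  | .and γ δ, lam => pval G σ V γ lam ⊓ pval G σ V δ lam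
  | .or γ δ, lam => pval G σ V γ lam ⊔ pval G σ V δ lam
  | .next γ, lam => pval G σ V γ (fun k => lam (k + 1))
  | .untl γ δ, lam =>
      ⨆ i : ℕ, (pval G σ V δ (fun k => lam (k + i)) ⊓
        ⨅ j : Fin i, pval G σ V γ (fun k => lam (k + (j : ℕ))))
  | .wuntl γ δ, lam =>
      (⨅ i : ℕ, pval G σ V γ (fun k => lam (k + i))) ⊔
      ⨆ i : ℕ, (pval G σ V δ (fun k => lam (k + i)) ⊓
        ⨅ j : Fin i, pval G σ V γ (fun k => lam (k + (j : ℕ))))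
end

/-- A join-irreducible element of a lattice with bottom. -/
def JoinIrred {L : Type*} [Lattice L] [OrderBot L] (ℓ : L) : Prop :=
  ℓ ≠ ⊥ ∧ ∀ x y : L, ℓ = x ⊔ y → ℓ = x ∨ ℓ = y

/-! Writing the two-element lattice as `Prop`, the threshold reduction `f_ℓ x = (ℓ ≤ x)` preserves
all meets, and it preserves all joins exactly when `ℓ` is join-prime and compact; in a finite
distributive lattice this is the case for every join-irreducible `ℓ`. Evaluating a formula
commutes with any reduction by a complete lattice homomorphism, since the semantics is built from
meets and joins alone. Hence `f_ℓ(M)` satisfies `φ` at `q` iff `ℓ ≤ [[φ]]_{M,q}`, and the theorem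
is the representation of an element of a finite lattice as the join of the join-irreducibles
below it. -/

open CompleteLattice

section JoinIrreducible

variable {α : Type*}

theorem joinIrred_iff_supIrred [Lattice α] [OrderBot α] {a : α} : JoinIrred a ↔ SupIrred a := by
  simp only [JoinIrred, SupIrred, isMin_iff_eq_bot, ne_eq, @eq_comm _ a]

theorem JoinIrred.supPrime [Lattice α] [OrderBot α]
    (hd : ∀ x y z : α, x ⊓ (y ⊔ z) = (x ⊓ y) ⊔ (x ⊓ z)) {a : α} (h : JoinIrred a) :
    SupPrime a :=
  letI : DistribLattice α := .ofInfSupLe fun x y z => (hd x y z).le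
  supPrime_iff_supIrred.2 (joinIrred_iff_supIrred.1 h)

variable [CompleteLattice α]

theorem SupPrime.le_sSup_iff {a : α} (hp : SupPrime a) (hc : IsCompactElement a) {s : Set α} :
    a ≤ sSup s ↔ ∃ x ∈ s, a ≤ x := by
  refine ⟨fun h => ?_, fun ⟨x, hx, hax⟩ => hax.trans (le_sSup hx)⟩
  obtain ⟨t, hts, hat⟩ := (isCompactElement_iff_exists_le_sSup_of_le_sSup _ a).1 hc s h
  obtain ⟨x, hxt, hax⟩ := hp.le_finset_sup.1 hat
  exact ⟨x, hts hxt, hax⟩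

def thresholdHom {a : α} (hp : SupPrime a) (hc : IsCompactElement a) :
    CompleteLatticeHom α Prop where
  toFun x := a ≤ x
  map_sInf' s := by simp [sInf_image]
  map_sSup' s := by simp [hp.le_sSup_iff hc, sSup_image]

theorem sSup_supIrred_le_eq [WellFoundedLT α] (a : α) : sSup {b | SupIrred b ∧ b ≤ a} = a := by
  obtain ⟨s, rfl, hs⟩ := exists_supIrred_decomposition a
  exact le_antisymm (sSup_le fun b hb => hb.2)
    (Finset.sup_le fun b hb => le_sSup ⟨hs hb, Finset.le_sup (f := id) hb⟩)

end JoinIrreducible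

section Reduction

variable {L' : Type*} [CompleteLattice L']
  (f : CompleteLatticeHom L L') (G : CGS Agt St Act) (σ : C → L) (V : AP → St → L)

mutual
theorem sval_map : ∀ (φ : SForm AP C Agt) (q : St),
    sval G (fun c => f (σ c)) (fun p q => f (V p q)) φ q = f (sval G σ V φ q)
  | .const _, _ => rfl
  | .atom _, _ => rfl
  | .and φ ψ, q => by simp only [sval, map_inf, sval_map φ, sval_map ψ]
  | .or φ ψ, q => by simp only [sval, map_sup, sval_map φ, sval_map ψ]
  | .coop A γ, q => by simp only [sval, map_iSup, map_iInf, pval_map γ]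
  | .nec A γ, q => by simp only [sval, map_iSup, map_iInf, pval_map γ]

theorem pval_map : ∀ (γ : PForm AP C Agt) (lam : ℕ → St),
    pval G (fun c => f (σ c)) (fun p q => f (V p q)) γ lam = f (pval G σ V γ lam)
  | .state φ, lam => sval_map φ (lam 0)
  | .and γ δ, lam => by simp only [pval, map_inf, pval_map γ, pval_map δ]
  | .or γ δ, lam => by simp only [pval, map_sup, pval_map γ, pval_map δ]
  | .next γ, lam => pval_map γ _
  | .untl γ δ, lam => by simp only [pval, map_iSup, map_iInf, map_inf, pval_map γ, pval_map δ]
  | .wuntl γ δ, lam => by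
      simp only [pval, map_sup, map_iSup, map_iInf, map_inf, pval_map γ, pval_map δ]
end

end Reduction

/-- Correctness of the translation-based model checking algorithm: the value of
a state formula is the join of those join-irreducible `ℓ` for which the
formula holds in the two-valued threshold reduction `f_ℓ(M)` (the two-element
lattice realized as `Prop`, `f_ℓ x = (ℓ ≤ x)`). -/
theorem stmt_14 {L : Type*} [CompleteLattice L] [Fintype L]
    (hdistrib : ∀ x y z : L, x ⊓ (y ⊔ z) = (x ⊓ y) ⊔ (x ⊓ z))
    {Agt St Act AP C : Type} [Fintype Agt] [Fintype St] [Fintype Act]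
    [Nonempty Agt] [Nonempty St] [Nonempty Act]
    (G : CGS Agt St Act) (σ : C → L) (V : AP → St → L)
    (φ : SForm AP C Agt) (q : St) :
    sval G σ V φ q =
      sSup {ℓ : L | JoinIrred ℓ ∧
        sval G (fun c => (ℓ ≤ σ c : Prop)) (fun p q' => (ℓ ≤ V p q' : Prop)) φ q = (⊤ : Prop)} := by
  have hcompact : ∀ ℓ : L, IsCompactElement ℓ :=
    (isSupFiniteCompact_iff_all_elements_compact L).1 (WellFoundedGT.isSupFiniteCompact L)
  have hreduce : ∀ ℓ, JoinIrred ℓ →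
      sval G (fun c => (ℓ ≤ σ c : Prop)) (fun p q' => (ℓ ≤ V p q' : Prop)) φ q =
        (ℓ ≤ sval G σ V φ q) := fun ℓ hℓ =>
    sval_map (thresholdHom (hℓ.supPrime hdistrib) (hcompact ℓ)) G σ V φ q
  conv_lhs => rw [← sSup_supIrred_le_eq (sval G σ V φ q)]
  congr 1
  ext ℓ
  simp only [Set.mem_ofPred_eq, ← joinIrred_iff_supIrred]
  exact and_congr_right fun hℓ => by rw [hreduce ℓ hℓ, Prop.top_eq_true, eq_iff_iff, iff_true]
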